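/- For every graph G, tcw(G) ≤ secw(G): the tree-cut width of G is at most its super edge-cut width. -/

import Mathlib

open scoped Classical

noncomputable section

namespace PaperSTCW

open SimpleGraph Finset

/-- Degree of a vertex in a multiset of edges over `Sym2 W`, loops counting twice. -/
def mdeg {W : Type} (E : Multiset (Sym2 W)) (v : W) : ℕ :=
  (E.map fun e => if e = Sym2.diag v then 2 else if v ∈ e then 1 else 0).sum

/-- Remove the edges incident to `v` and, if `lift = true` and `v` was incident to exactly
two non-loop edges, add the lifted edge between their other endpoints
(this is the edge replacement performed when suppressing a degree-2 vertex). -/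
def nextE {W : Type} (lift : Bool) (v : W) (E : Multiset (Sym2 W)) : Multiset (Sym2 W) :=
  E.filter (fun e => v ∉ e) +
    (if lift then
      (match (E.filter (fun e => v ∈ e)).toList.map
          (fun e => if hm : v ∈ e then Sym2.Mem.other hm else v) with
        | [a, b] => ({s(a, b)} : Multiset (Sym2 W))
        | _ => 0)
     else 0)

/-- Exhaustively delete (and, when `lift = true`, suppress) vertices outside `X` of degree
at most `d` from the multigraph with vertex set `S` and edge multiset `E`;
returns the surviving vertex set. -/
def reduce {W : Type} (X : Finset W) (d : ℕ) (lift : Bool)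
    (S : Finset W) (E : Multiset (Sym2 W)) : Finset W :=
  if h : ∃ v, v ∈ S ∧ v ∉ X ∧ mdeg E v ≤ d then
    reduce X d lift (S.erase h.choose) (nextE lift h.choose E)
  else S
termination_by S.card
decreasing_by exact Finset.card_erase_lt_of_mem h.choose_spec.1

/-- A tree-cut decomposition of `G`: a rooted tree together with a near-partition of the
vertices of `G` into bags (each vertex lies in exactly one bag; bags may be empty). -/
structure TCD {V : Type} [Fintype V] (G : SimpleGraph V) where
  n : ℕ
  T : SimpleGraph (Fin n)
  tree : T.IsTree
  root : Fin n
  bag : Fin n → Finset V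
  partition : ∀ v : V, ∃! t, v ∈ bag t

variable {V : Type} [Fintype V] {G : SimpleGraph V}

/-- The set of nodes in the subtree rooted at `t` (those nodes all of whose walks
from the root pass through `t`). -/
def TCD.desc (D : TCD G) (t : Fin D.n) : Set (Fin D.n) :=
  {s | ∀ p : D.T.Walk D.root s, t ∈ p.support}

/-- The union of the bags of the subtree rooted at `t`. -/
def TCD.Y (D : TCD G) (t : Fin D.n) : Finset V :=
  Finset.univ.filter fun v => ∃ s, s ∈ D.desc t ∧ v ∈ D.bag s

/-- Adhesion of a node: the number of edges of `G` with exactly one endpoint in `Y t`. -/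
def TCD.adh (D : TCD G) (t : Fin D.n) : ℕ :=
  ((Finset.univ : Finset (Sym2 V)).filter fun e =>
    e ∈ G.edgeSet ∧ ∃ a b, e = s(a, b) ∧ a ∈ D.Y t ∧ b ∉ D.Y t).card

/-- The connected components of `T - t`. -/
def TCD.Cmp (D : TCD G) (t : Fin D.n) : Type :=
  (SimpleGraph.induce {s | s ≠ t} D.T).ConnectedComponent

instance (D : TCD G) (t : Fin D.n) : Fintype (D.Cmp t) := by
  unfold TCD.Cmp; infer_instance

/-- The consolidation map of the torso at `t`: vertices of the bag of `t` are kept,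
all vertices in the bags of a fixed connected component of `T - t` are consolidated
into a single vertex. -/
def TCD.toTorso (D : TCD G) (t : Fin D.n) (v : V) : V ⊕ D.Cmp t :=
  if h : ∃ s, s ≠ t ∧ v ∈ D.bag s then
    Sum.inr ((SimpleGraph.induce {s | s ≠ t} D.T).connectedComponentMk
      ⟨h.choose, h.choose_spec.1⟩)
  else Sum.inl v

/-- Vertex set of the torso at `t`. -/
def TCD.torsoS (D : TCD G) (t : Fin D.n) : Finset (V ⊕ D.Cmp t) :=
  ((D.bag t).image Sum.inl) ∪ (Finset.univ.image Sum.inr)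

/-- Edge multiset of the torso at `t` (consolidation keeps multiplicities and drops loops). -/
def TCD.torsoE (D : TCD G) (t : Fin D.n) : Multiset (Sym2 (V ⊕ D.Cmp t)) :=
  (((Finset.univ : Finset (Sym2 V)).filter fun e => e ∈ G.edgeSet).val.map
      (Sym2.map (D.toTorso t))).filter fun e => ¬ e.IsDiag

/-- Torso-size: the order of the 3-center of the torso at `t`, obtained by exhaustively
suppressing vertices outside the bag of degree at most 2. -/
def TCD.tor (D : TCD G) (t : Fin D.n) : ℕ :=
  (reduce ((D.bag t).image Sum.inl) 2 true (D.torsoS t) (D.torsoE t)).card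

/-- The order of the 2-center of the torso at `t`, obtained by exhaustively deleting
vertices outside the bag of degree at most 1. -/
def TCD.tor2 (D : TCD G) (t : Fin D.n) : ℕ :=
  (reduce ((D.bag t).image Sum.inl) 1 false (D.torsoS t) (D.torsoE t)).card

/-- The order of the 1-center of the torso at `t`, obtained by deleting isolated
vertices outside the bag. -/
def TCD.tor1 (D : TCD G) (t : Fin D.n) : ℕ :=
  (reduce ((D.bag t).image Sum.inl) 0 false (D.torsoS t) (D.torsoE t)).card

/-- Width of a tree-cut decomposition. -/
def TCD.width (D : TCD G) : ℕ := Finset.univ.sup fun t => max (D.adh t) (D.tor t)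

/-- Slim width of a tree-cut decomposition. -/
def TCD.slimWidth (D : TCD G) : ℕ := Finset.univ.sup fun t => max (D.adh t) (D.tor2 t)

/-- 0-width of a tree-cut decomposition. -/
def TCD.zeroWidth (D : TCD G) : ℕ := Finset.univ.sup fun t => max (D.adh t) (D.tor1 t)

/-- Tree-cut width. -/
def tcw {V : Type} [Fintype V] (G : SimpleGraph V) : ℕ :=
  sInf {k | ∃ D : TCD G, D.width ≤ k}

/-- Slim tree-cut width. -/
def stcw {V : Type} [Fintype V] (G : SimpleGraph V) : ℕ :=
  sInf {k | ∃ D : TCD G, D.slimWidth ≤ k}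

/-- 0-tree-cut width. -/
def tcw0 {V : Type} [Fintype V] (G : SimpleGraph V) : ℕ :=
  sInf {k | ∃ D : TCD G, D.zeroWidth ≤ k}


/-! ### Bundled finite graphs and weak immersions -/

structure FG where
  V : Type
  [fin : Fintype V]
  G : SimpleGraph V

attribute [instance] FG.fin

/-- One step of obtaining a graph from another: an isomorphic copy, deleting an edge,
deleting a vertex, or lifting a pair of incident edges `(x,y), (y,z)` (deleting them
and adding the edge `(x,z)`). `ImmStep B A` means `B` is obtained from `A`. -/
inductive ImmStep : FG → FG → Prop
  | iso (A B : FG) : (Nonempty (B.G ≃g A.G)) → ImmStep B A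
  | delEdge (A : FG) (e : Sym2 A.V) (he : e ∈ A.G.edgeSet) :
      ImmStep (FG.mk A.V (A.G.deleteEdges {e})) A
  | delVertex (A : FG) (v : A.V) :
      ImmStep (FG.mk {w : A.V // w ≠ v} (SimpleGraph.induce {w : A.V | w ≠ v} A.G)) A
  | lift (A : FG) (x y z : A.V) (hxy : A.G.Adj x y) (hyz : A.G.Adj y z) (hxz : x ≠ z) :
      ImmStep (FG.mk A.V (SimpleGraph.fromEdgeSet
        ((A.G.edgeSet \ {s(x, y), s(y, z)}) ∪ {s(x, z)}))) A

/-- `Immersion H G` : `G` contains `H` as a weak immersion, i.e. `H` can be obtained from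
`G` by a sequence of edge deletions, vertex deletions and liftings. -/
def Immersion (H G : FG) : Prop := Relation.ReflTransGen ImmStep H G

/-- `H` consists of `m` cycles intersecting in one vertex and otherwise pairwise
vertex-disjoint. -/
def IsFlower (m : ℕ) {W : Type} [Fintype W] (H : SimpleGraph W) : Prop :=
  H.Connected ∧ ∃ c : W, H.degree c = 2 * m ∧ ∀ v : W, v ≠ c → H.degree v = 2

/-- `H` consists of `m` paths with the same two endpoints which are otherwise pairwise
vertex-disjoint. -/
def IsTheta (m : ℕ) {W : Type} [Fintype W] (H : SimpleGraph W) : Prop :=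
  H.Connected ∧ ∃ x y : W, x ≠ y ∧ H.degree x = m ∧ H.degree y = m ∧
    (∀ v : W, v ≠ x → v ≠ y → H.degree v = 2) ∧
    (SimpleGraph.induce {v : W | v ≠ x} H).IsAcyclic ∧
    (SimpleGraph.induce {v : W | v ≠ y} H).IsAcyclic

/-- The star `K_{1,r}`. -/
def star (r : ℕ) : SimpleGraph (Fin 1 ⊕ Fin r) := completeBipartiteGraph (Fin 1) (Fin r)

/-- The windmill `W_r`: `r` triangles sharing one vertex, otherwise vertex-disjoint. -/
def windmill (r : ℕ) : SimpleGraph (Option (Fin r × Fin 2)) :=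
  SimpleGraph.fromRel (fun x y =>
    x = none ∨ ∃ (i : Fin r) (a b : Fin 2), x = some (i, a) ∧ y = some (i, b))

/-- `G` is the `k`-edge sum `G₁ ⊕ₖ G₂` at vertices `v₁, v₂` of degree `k`. -/
def IsEdgeSum {V₁ V₂ : Type} [Fintype V₁] [Fintype V₂] (k : ℕ)
    (G₁ : SimpleGraph V₁) (G₂ : SimpleGraph V₂) (v₁ : V₁) (v₂ : V₂)
    (G : SimpleGraph ({x : V₁ // x ≠ v₁} ⊕ {y : V₂ // y ≠ v₂})) : Prop :=
  G₁.degree v₁ = k ∧ G₂.degree v₂ = k ∧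
  ∃ π : V₁ → V₂, Set.BijOn π (G₁.neighborSet v₁) (G₂.neighborSet v₂) ∧
    (∀ a b : {x : V₁ // x ≠ v₁}, G.Adj (Sum.inl a) (Sum.inl b) ↔ G₁.Adj a b) ∧
    (∀ a b : {y : V₂ // y ≠ v₂}, G.Adj (Sum.inr a) (Sum.inr b) ↔ G₂.Adj a b) ∧
    (∀ (a : {x : V₁ // x ≠ v₁}) (b : {y : V₂ // y ≠ v₂}),
      G.Adj (Sum.inl a) (Sum.inr b) ↔ (G₁.Adj v₁ a ∧ π (a : V₁) = (b : V₂)))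

/-! ### Treewidth and maximum degree -/

/-- A tree decomposition of `G`. -/
structure TreeDecomp {V : Type} [Fintype V] (G : SimpleGraph V) where
  n : ℕ
  T : SimpleGraph (Fin n)
  tree : T.IsTree
  bag : Fin n → Finset V
  cover_v : ∀ v : V, ∃ t, v ∈ bag t
  cover_e : ∀ u v : V, G.Adj u v → ∃ t, u ∈ bag t ∧ v ∈ bag t
  coherent : ∀ v : V, (SimpleGraph.induce {t : Fin n | v ∈ bag t} T).Connected

/-- Width of a tree decomposition: maximum bag size minus one. -/
def TreeDecomp.width (D : TreeDecomp G) : ℕ :=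
  (Finset.univ.sup fun t => (D.bag t).card) - 1

/-- Treewidth. -/
def tw {V : Type} [Fintype V] (G : SimpleGraph V) : ℕ :=
  sInf {w | ∃ D : TreeDecomp G, D.width ≤ w}

/-- Maximum degree. -/
def maxDeg {V : Type} [Fintype V] (G : SimpleGraph V) : ℕ :=
  Finset.univ.sup fun v => G.degree v

/-! ### Edge-cut width, super edge-cut width, feedback edge number -/

/-- `T` is a maximal spanning forest of `G`. -/
def IsMSF {V : Type} (G T : SimpleGraph V) : Prop :=
  T ≤ G ∧ T.IsAcyclic ∧ ∀ u v : V, G.Adj u v → T.Reachable u v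

/-- The size of the local feedback edge set at `v`: edges of `G` outside `T` whose unique
`T`-path between their endpoints contains `v`. -/
def elocCard {V : Type} [Fintype V] (G T : SimpleGraph V) (v : V) : ℕ :=
  ((Finset.univ : Finset (Sym2 V)).filter fun e =>
    e ∈ G.edgeSet ∧ e ∉ T.edgeSet ∧
      ∃ a b : V, e = s(a, b) ∧ ∃ p : T.Walk a b, p.IsPath ∧ v ∈ p.support).card

/-- Edge-cut width of a pair `(G, T)`. -/
def ecwPair {V : Type} [Fintype V] (G T : SimpleGraph V) : ℕ :=
  1 + Finset.univ.sup fun v => elocCard G T v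

/-- Edge-cut width. -/
def ecw {V : Type} [Fintype V] (G : SimpleGraph V) : ℕ :=
  sInf {k | ∃ T : SimpleGraph V, IsMSF G T ∧ ecwPair G T ≤ k}

/-- Super edge-cut width: minimum edge-cut width over all supergraphs of `G`. -/
def secw {V : Type} [Fintype V] (G : SimpleGraph V) : ℕ :=
  sInf {k | ∃ (W : Type) (fW : Fintype W) (H : SimpleGraph W) (ι : V ↪ W),
    (∀ u v : V, G.Adj u v → H.Adj (ι u) (ι v)) ∧
    ∃ T : SimpleGraph W, IsMSF H T ∧ @ecwPair W fW H T ≤ k}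

/-- Feedback edge number: minimum number of edges whose deletion makes `G` a forest. -/
def fen {V : Type} [Fintype V] (G : SimpleGraph V) : ℕ :=
  sInf {m | ∃ F : Finset (Sym2 V), ↑F ⊆ G.edgeSet ∧ F.card = m ∧
    (G.deleteEdges ↑F).IsAcyclic}

/-! ### Nice decompositions -/

/-- The children of `t` in the rooted tree of `D`. -/
def TCD.children (D : TCD G) (t : Fin D.n) : Finset (Fin D.n) :=
  Finset.univ.filter fun s => D.T.Adj t s ∧ s ∈ D.desc t

/-- The neighborhood of a vertex set `S` in `G`. -/
def nbhd {V : Type} [Fintype V] (G : SimpleGraph V) (S : Finset V) : Finset V :=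
  Finset.univ.filter fun v => v ∉ S ∧ ∃ u ∈ S, G.Adj u v

/-- A non-root node is thin if its adhesion is at most 2. -/
def TCD.IsThin (D : TCD G) (t : Fin D.n) : Prop := t ≠ D.root ∧ D.adh t ≤ 2

/-- A tree-cut decomposition is nice if for every thin node `t`, `N(Y_t)` avoids the
sets `Y_b` of all siblings `b` of `t`. -/
def TCD.IsNice (D : TCD G) : Prop :=
  ∀ t : Fin D.n, D.IsThin t →
    ∀ p b : Fin D.n, t ∈ D.children p → b ∈ D.children p → b ≠ t →
      ∀ v ∈ nbhd G (D.Y t), v ∉ D.Y b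

/-- `B_t`: the thin children `b` of `t` with `|N(Y_b)| ≤ 2` and `N(Y_b) ⊆ X_t`. -/
def TCD.B (D : TCD G) (t : Fin D.n) : Finset (Fin D.n) :=
  (D.children t).filter fun b => (nbhd G (D.Y b)).card ≤ 2 ∧ nbhd G (D.Y b) ⊆ D.bag t

/-- `B_t^{(2)}`: the members of `B_t` of adhesion exactly 2. -/
def TCD.B2 (D : TCD G) (t : Fin D.n) : Finset (Fin D.n) :=
  (D.B t).filter fun b => D.adh b = 2

end PaperSTCW

/-! Let `(H, T)` witness `secw G`, with `G ⊆ H` via `ι`. Extend the spanning forest `T` to a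
spanning tree `R` of all vertices of `H`, root it anywhere, and put `v ∈ V(G)` into the bag of the
node `ι v`; every bag has at most one vertex. An edge of `H` whose ends are separated by a node
`t` of `R` is either an `R`-edge at `t` or lies in `E_loc(t)`: its `T`-path is an `R`-path.

An edge of `G` leaving the subtree of `t` is thus either the edge from `t` to its parent or an edge
of `E_loc(t)`, so `adh(t) ≤ 1 + |E_loc(t)|`. In the torso at `t`, a component `c` of `R - t` is
joined to the rest by at most one `R`-edge (to `t`) and by the edges of `E_loc(t)` meeting `c`.
An edge meets at most two components, so by double counting at most `|E_loc(t)|` components have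
degree `≥ 3`; only these and the bag of `t` survive in the 3-center, and `tor(t) ≤ 1 + |E_loc(t)|`.
-/

namespace SimpleGraph

variable {X : Type} {R : SimpleGraph X}

lemma IsAcyclic.eq_of_adj_of_walk_notMem_support (hR : R.IsAcyclic) {t x y : X}
    (hx : R.Adj t x) (hy : R.Adj t y) (p : R.Walk x y) (ht : t ∉ p.support) : x = y := by
  have hpath : (Walk.cons hx p.toPath.val).IsPath :=
    p.toPath.property.cons fun h => ht (p.support_toPath_subset_support h)
  simpa using (hR.eq_snd_of_adj_start hpath hy (Walk.end_mem_support _)).symm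

lemma IsAcyclic.subsingleton_edges_into_of_walk_notMem_support (hR : R.IsAcyclic) {t : X}
    {A : Set X} (hA : ∀ a ∈ A, ∀ b ∈ A, ∃ p : R.Walk a b, t ∉ p.support) :
    {f : Sym2 X | ∃ y ∈ A, R.Adj y t ∧ f = s(y, t)}.Subsingleton := by
  rintro _ ⟨y₁, hy₁, hadj₁, rfl⟩ _ ⟨y₂, hy₂, hadj₂, rfl⟩
  obtain ⟨p, hp⟩ := hA y₁ hy₁ y₂ hy₂
  rw [hR.eq_of_adj_of_walk_notMem_support hadj₁.symm hadj₂.symm p hp]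

def compOf (R : SimpleGraph X) (t x : X) : Option (R.induce {s | s ≠ t}).ConnectedComponent :=
  if h : x ≠ t then some ((R.induce {s | s ≠ t}).connectedComponentMk ⟨x, h⟩) else none

lemma ne_of_compOf_eq_some {t x : X} {c : (R.induce {s | s ≠ t}).ConnectedComponent}
    (h : R.compOf t x = some c) : x ≠ t := by
  rintro rfl
  simp [compOf] at h

lemma compOf_eq_of_walk {t a b : X} (p : R.Walk a b) (ht : t ∉ p.support) :
    R.compOf t a = R.compOf t b := by
  have hs : ∀ x ∈ p.support, x ∈ {s | s ≠ t} := fun x hx hxt => ht (hxt ▸ hx)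
  have ha : a ≠ t := hs a p.start_mem_support
  have hb : b ≠ t := hs b p.end_mem_support
  simp only [compOf, dif_pos ha, dif_pos hb, Option.some.injEq]
  exact ConnectedComponent.sound (p.induce _ hs).reachable

lemma exists_walk_of_compOf_eq {t a b : X} {c : (R.induce {s | s ≠ t}).ConnectedComponent}
    (ha : R.compOf t a = some c) (hb : R.compOf t b = some c) :
    ∃ p : R.Walk a b, t ∉ p.support := by
  unfold compOf at ha hb
  split_ifs at ha hb
  obtain ⟨q⟩ := ConnectedComponent.exact (Option.some.inj (ha.trans hb.symm))
  refine ⟨q.map (Embedding.induce _).toHom, fun h => ?_⟩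
  obtain ⟨x, -, hx⟩ := List.mem_map.1 (Walk.support_map _ q ▸ h)
  exact x.2 hx

end SimpleGraph

namespace PaperSTCW

open SimpleGraph Finset

lemma card_filter_exists_mem_eq_some_le_two {X C : Type} (g : X → Option C) (f : Sym2 X)
    (s : Finset C) [DecidablePred fun c => ∃ x ∈ f, g x = some c] :
    #{c ∈ s | ∃ x ∈ f, g x = some c} ≤ 2 := by
  classical
  obtain ⟨⟨a, b⟩, rfl⟩ := Quot.exists_rep f
  calc #{c ∈ s | ∃ x ∈ s(a, b), g x = some c}
      ≤ #((g a).toFinset ∪ (g b).toFinset) := by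
        refine Finset.card_le_card fun c hc => ?_
        simp only [Finset.mem_filter, Sym2.mem_iff, exists_eq_or_imp, exists_eq_left] at hc
        simpa [Option.mem_toFinset] using hc.2
    _ ≤ 1 + 1 := by
        refine (Finset.card_union_le _ _).trans (add_le_add ?_ ?_) <;>
          exact Finset.card_le_one.2 fun _ h₁ _ h₂ =>
            Option.mem_unique (Option.mem_toFinset.1 h₁) (Option.mem_toFinset.1 h₂)

lemma card_le_card_add_one_of_injOn {α β : Type} {s : Finset α} {t : Finset β} {u : Set β}
    {f : α → β} (hf : Set.InjOn f s) (hmaps : ∀ a ∈ s, f a ∈ t ∨ f a ∈ u)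
    (hu : u.Subsingleton) : #s ≤ #t + 1 := by
  classical
  have hsub : s.image f ⊆ t ∪ (s.image f).filter (· ∈ u) := fun b hb => by
    obtain ⟨a, ha, rfl⟩ := Finset.mem_image.1 hb
    rcases hmaps a ha with h | h
    · exact Finset.mem_union_left _ h
    · exact Finset.mem_union_right _ (Finset.mem_filter.2 ⟨hb, h⟩)
  have hu' : #((s.image f).filter (· ∈ u)) ≤ 1 :=
    Finset.card_le_one.2 fun _ h₁ _ h₂ => hu (Finset.mem_filter.1 h₁).2 (Finset.mem_filter.1 h₂).2
  calc #s = #(s.image f) := (Finset.card_image_of_injOn hf).symm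
    _ ≤ #t + #((s.image f).filter (· ∈ u)) :=
      (Finset.card_le_card hsub).trans (Finset.card_union_le _ _)
    _ ≤ #t + 1 := Nat.add_le_add_left hu' _

section Multigraph

variable {W : Type}

lemma mdeg_add (A B : Multiset (Sym2 W)) (x : W) : mdeg (A + B) x = mdeg A x + mdeg B x := by
  simp [mdeg]

lemma mdeg_filter_not_isDiag (M : Multiset (Sym2 W)) (x : W)
    [DecidablePred fun e : Sym2 W => ¬ e.IsDiag]
    [DecidablePred fun e : Sym2 W => ¬ e.IsDiag ∧ x ∈ e] :
    mdeg (M.filter fun e => ¬ e.IsDiag) x =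
      Multiset.card (M.filter fun e => ¬ e.IsDiag ∧ x ∈ e) := by
  induction M using Multiset.induction_on with
  | empty => simp [mdeg]
  | cons e M ih =>
    rw [Multiset.filter_cons, Multiset.filter_cons, mdeg_add, ih]
    by_cases hd : e.IsDiag
    · simp [hd, mdeg]
    · have he : e ≠ Sym2.diag x := fun h => hd (h ▸ Sym2.diag_isDiag x)
      by_cases hx : x ∈ e <;> simp [hd, hx, he, mdeg, add_comm]

lemma mdeg_singleton_le_pair {a b : W} {e₁ e₂ : Sym2 W} (ha : a ∈ e₁) (hb : b ∈ e₂) (x : W) :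
    mdeg {s(a, b)} x ≤ mdeg {e₁, e₂} x := by
  obtain ⟨a', rfl⟩ := Sym2.mem_iff_exists.1 ha
  obtain ⟨b', rfl⟩ := Sym2.mem_iff_exists.1 hb
  simp only [mdeg, Multiset.map_singleton, Multiset.sum_singleton, Multiset.insert_eq_cons,
    Multiset.map_cons, Multiset.sum_cons, Sym2.diag, Sym2.eq_iff, Sym2.mem_iff]
  split_ifs <;> grind

lemma mdeg_nextE_le (lift : Bool) (v : W) (E : Multiset (Sym2 W)) (x : W) :
    mdeg (nextE lift v E) x ≤ mdeg E x := by
  have hE : mdeg E x = mdeg (E.filter (v ∉ ·)) x + mdeg (E.filter (v ∈ ·)) x := by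
    rw [← mdeg_add, add_comm, Multiset.filter_add_not]
  rw [nextE, mdeg_add, hE, add_le_add_iff_left]
  split
  · split
    · rename_i a b hmap
      obtain ⟨e₁, l₁, hl₁, rfl, hmap₁⟩ := List.map_eq_cons_iff.1 hmap
      obtain ⟨e₂, l₂, rfl, rfl, hmap₂⟩ := List.map_eq_cons_iff.1 hmap₁
      obtain rfl := List.map_eq_nil_iff.1 hmap₂
      have hfilter : E.filter (v ∈ ·) = {e₁, e₂} := by
        rw [← Multiset.coe_toList (E.filter (v ∈ ·)), hl₁]
        rfl
      have hother : ∀ e ∈ E.filter (v ∈ ·),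
          (if hm : v ∈ e then Sym2.Mem.other hm else v) ∈ e := fun e he => by
        rw [dif_pos (Multiset.mem_filter.1 he).2]
        exact Sym2.other_mem _
      rw [hfilter] at hother ⊢
      exact mdeg_singleton_le_pair (hother e₁ (by simp)) (hother e₂ (by simp)) x
    · simp [mdeg]
  · simp [mdeg]

lemma mem_reduce {X : Finset W} {d : ℕ} {lift : Bool} {S : Finset W} {E : Multiset (Sym2 W)}
    {x : W} (hx : x ∈ reduce X d lift S E) : x ∈ S ∧ (x ∈ X ∨ d < mdeg E x) := by
  induction S, E using reduce.induct X d lift with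
  | case1 S E h ih =>
    rw [reduce, dif_pos h] at hx
    obtain ⟨hxS, hxX | hxd⟩ := ih hx
    · exact ⟨Finset.mem_of_mem_erase hxS, Or.inl hxX⟩
    · exact ⟨Finset.mem_of_mem_erase hxS, Or.inr (hxd.trans_le (mdeg_nextE_le _ _ _ _))⟩
  | case2 S E h =>
    rw [reduce, dif_neg h] at hx
    push Not at h
    by_cases hxX : x ∈ X
    · exact ⟨hx, Or.inl hxX⟩
    · exact ⟨hx, Or.inr (h x hx hxX)⟩

lemma card_reduce_le (X : Finset W) (d : ℕ) (lift : Bool) (S : Finset W)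
    (E : Multiset (Sym2 W)) [DecidablePred fun x => x ∉ X ∧ d < mdeg E x] :
    #(reduce X d lift S E) ≤ #X + #{x ∈ S | x ∉ X ∧ d < mdeg E x} := by
  classical
  refine (Finset.card_le_card fun x hx => ?_).trans (Finset.card_union_le _ _)
  obtain ⟨hxS, hxX | hxd⟩ := mem_reduce hx
  · exact Finset.mem_union_left _ hxX
  · by_cases hxX : x ∈ X
    · exact Finset.mem_union_left _ hxX
    · exact Finset.mem_union_right _ (Finset.mem_filter.2 ⟨hxS, hxX, hxd⟩)

end Multigraph

section Eloc

variable {X : Type} [Fintype X]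

/-- The local feedback edge set `E_loc(v)`. -/
def eloc (H T : SimpleGraph X) (v : X) : Finset (Sym2 X) :=
  {e | e ∈ H.edgeSet ∧ e ∉ T.edgeSet ∧
    ∃ a b : X, e = s(a, b) ∧ ∃ p : T.Walk a b, p.IsPath ∧ v ∈ p.support}

lemma elocCard_eq_card_eloc (H T : SimpleGraph X) (v : X) : elocCard H T v = #(eloc H T v) :=
  rfl

lemma ecwPair_bot (T : SimpleGraph X) : ecwPair ⊥ T = 1 := by
  simp [ecwPair, elocCard]

lemma elocCard_comap_le {Y : Type} [Fintype Y] (f : X ↪ Y) (H T : SimpleGraph Y) (x : X) :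
    elocCard (H.comap f) (T.comap f) x ≤ elocCard H T (f x) := by
  refine Finset.card_le_card_of_injOn (Sym2.map f) (fun e he => ?_)
    (Sym2.map.injective f.injective).injOn
  simp only [Finset.coe_filter, Finset.mem_univ, true_and, Set.mem_ofPred_eq] at he ⊢
  obtain ⟨hH, hT, a, b, rfl, p, hp, hx⟩ := he
  have hmem : Hom.comap f T x ∈ (p.map (Hom.comap f T)).support := by
    rw [Walk.support_map]
    exact List.mem_map_of_mem hx
  exact ⟨hH, hT, f a, f b, rfl, p.map (Hom.comap f T), hp.map f.injective, hmem⟩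

lemma ecwPair_comap_le {Y : Type} [Fintype Y] (f : X ↪ Y) (H T : SimpleGraph Y) :
    ecwPair (H.comap f) (T.comap f) ≤ ecwPair H T :=
  Nat.add_le_add_left (Finset.sup_le fun x _ =>
    (elocCard_comap_le f H T x).trans (Finset.le_sup (Finset.mem_univ _))) 1

lemma mem_eloc_or_adj_of_forall_mem_support {H T R : SimpleGraph X} (hTR : T ≤ R)
    (hHT : ∀ a b, H.Adj a b → T.Reachable a b) {t a b : X} (hab : H.Adj a b) (ha : a ≠ t)
    (hsep : ∀ p : R.Walk a b, t ∈ p.support) :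
    s(a, b) ∈ eloc H T t ∨ R.Adj a t ∧ b = t := by
  by_cases hT : T.Adj a b
  · have ht := hsep (hTR hT).toWalk
    simp only [Adj.toWalk, Walk.support_cons, Walk.support_nil, List.mem_cons,
      List.not_mem_nil, or_false] at ht
    obtain rfl := ht.resolve_left (Ne.symm ha)
    exact Or.inr ⟨hTR hT, rfl⟩
  · obtain ⟨p⟩ := hHT a b hab
    refine Or.inl (Finset.mem_filter.2 ⟨Finset.mem_univ _, hab, hT, a, b, rfl, p.toPath,
      p.toPath.property, ?_⟩)
    simpa using hsep (p.toPath.val.mapLe hTR)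

end Eloc

section Desc

variable {V : Type} [Fintype V] {G : SimpleGraph V}

lemma TCD.mem_desc_self (D : TCD G) (t : Fin D.n) : t ∈ D.desc t :=
  fun p => p.end_mem_support

lemma TCD.exists_walk_root_of_notMem_desc (D : TCD G) {t a : Fin D.n} (ha : a ∉ D.desc t) :
    ∃ p : D.T.Walk D.root a, t ∉ p.support := by
  simpa [TCD.desc] using ha

lemma TCD.mem_support_of_mem_desc (D : TCD G) {t a b : Fin D.n} (ha : a ∈ D.desc t)
    (hb : b ∉ D.desc t) (q : D.T.Walk a b) : t ∈ q.support := by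
  obtain ⟨p, hp⟩ := D.exists_walk_root_of_notMem_desc hb
  have ht := ha (p.append q.reverse)
  rw [Walk.mem_support_append_iff, Walk.support_reverse, List.mem_reverse] at ht
  exact ht.resolve_left hp

lemma TCD.exists_walk_of_notMem_desc (D : TCD G) {t a b : Fin D.n} (ha : a ∉ D.desc t)
    (hb : b ∉ D.desc t) : ∃ p : D.T.Walk a b, t ∉ p.support := by
  obtain ⟨p, hp⟩ := D.exists_walk_root_of_notMem_desc ha
  obtain ⟨q, hq⟩ := D.exists_walk_root_of_notMem_desc hb
  exact ⟨p.reverse.append q, by simp [Walk.mem_support_append_iff, hp, hq]⟩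

end Desc

section OfTree

variable {V : Type} [Fintype V] {n : ℕ}

abbrev TCD.ofTree (G : SimpleGraph V) (R : SimpleGraph (Fin n)) (hR : R.IsTree) (r : Fin n)
    (ι : V ↪ Fin n) : TCD G where
  n := n
  T := R
  tree := hR
  root := r
  bag s := {v | ι v = s}
  partition v := ⟨ι v, by simp, fun _ hs => (Finset.mem_filter.1 hs).2.symm⟩

variable {G : SimpleGraph V} {R H T : SimpleGraph (Fin n)} {hR : R.IsTree} {r : Fin n}
  {ι : V ↪ Fin n}

lemma TCD.mem_bag_ofTree {v : V} {s : Fin n} : v ∈ (TCD.ofTree G R hR r ι).bag s ↔ ι v = s := by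
  simp

lemma TCD.card_bag_ofTree_le_one (s : Fin n) : #((TCD.ofTree G R hR r ι).bag s) ≤ 1 :=
  Finset.card_le_one.2 fun _ hu _ hv =>
    ι.injective ((mem_bag_ofTree.1 hu).trans (mem_bag_ofTree.1 hv).symm)

lemma TCD.mem_Y_ofTree {v : V} {t : Fin n} :
    v ∈ (TCD.ofTree G R hR r ι).Y t ↔ ι v ∈ (TCD.ofTree G R hR r ι).desc t := by
  simp [TCD.Y]

lemma TCD.toTorso_ofTree_eq_inr {v : V} {t : Fin n} {c : (TCD.ofTree G R hR r ι).Cmp t} :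
    (TCD.ofTree G R hR r ι).toTorso t v = Sum.inr c ↔ R.compOf t (ι v) = some c := by
  unfold TCD.toTorso compOf
  split_ifs with hex h h
  · have hchoose : hex.choose = ι v := (mem_bag_ofTree.1 hex.choose_spec.2).symm
    have hmk : (R.induce {s | s ≠ t}).connectedComponentMk ⟨hex.choose, hex.choose_spec.1⟩ =
        (R.induce {s | s ≠ t}).connectedComponentMk ⟨ι v, h⟩ :=
      congrArg _ (Subtype.ext hchoose)
    exact ⟨fun hc => congrArg some (hmk.symm.trans (Sum.inr_injective hc)),
      fun hc => congrArg Sum.inr (hmk.trans (Option.some_injective _ hc))⟩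
  · obtain ⟨s, hs, hv⟩ := hex
    exact absurd (mem_bag_ofTree.1 hv ▸ not_not.1 h) hs
  · exact absurd ⟨ι v, h, mem_bag_ofTree.2 rfl⟩ hex
  · simp

lemma TCD.adh_ofTree_le (hTR : T ≤ R) (hHT : ∀ a b, H.Adj a b → T.Reachable a b)
    (hι : ∀ u v, G.Adj u v → H.Adj (ι u) (ι v)) (t : Fin n) :
    (TCD.ofTree G R hR r ι).adh t ≤ #(eloc H T t) + 1 := by
  refine card_le_card_add_one_of_injOn (Sym2.map.injective ι.injective).injOn (fun e he => ?_)
    (hR.isAcyclic.subsingleton_edges_into_of_walk_notMem_support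
      (A := ((TCD.ofTree G R hR r ι).desc t)ᶜ) fun a ha b hb =>
        (TCD.ofTree G R hR r ι).exists_walk_of_notMem_desc ha hb)
  obtain ⟨hGe, a, b, rfl, ha, hb⟩ := (Finset.mem_filter.1 he).2
  rw [TCD.mem_Y_ofTree] at ha hb
  have hsep (p : R.Walk (ι b) (ι a)) : t ∈ p.support := by
    simpa [Walk.support_reverse] using
      (TCD.ofTree G R hR r ι).mem_support_of_mem_desc ha hb p.reverse
  have hbt : ι b ≠ t := fun h => hb (h ▸ (TCD.ofTree G R hR r ι).mem_desc_self t)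
  rw [Sym2.map_mk, Sym2.eq_swap]
  rcases mem_eloc_or_adj_of_forall_mem_support hTR hHT (hι b a hGe.symm) hbt hsep with
    h | ⟨hadj, hat⟩
  · exact Or.inl h
  · exact Or.inr ⟨ι b, hb, hadj, by rw [hat]⟩

lemma TCD.mdeg_torsoE_ofTree_le (hTR : T ≤ R) (hHT : ∀ a b, H.Adj a b → T.Reachable a b)
    (hι : ∀ u v, G.Adj u v → H.Adj (ι u) (ι v)) {t : Fin n}
    (c : (TCD.ofTree G R hR r ι).Cmp t) :
    mdeg ((TCD.ofTree G R hR r ι).torsoE t) (Sum.inr c) ≤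
      #{f ∈ eloc H T t | ∃ x ∈ f, R.compOf t x = some c} + 1 := by
  have hcross (u v : V) (huv : G.Adj u v)
      (hu : (TCD.ofTree G R hR r ι).toTorso t u = Sum.inr c)
      (hv : (TCD.ofTree G R hR r ι).toTorso t v ≠ Sum.inr c) :
      s(ι u, ι v) ∈ {f ∈ eloc H T t | ∃ x ∈ f, R.compOf t x = some c} ∨
        s(ι u, ι v) ∈ {f | ∃ y ∈ {y | R.compOf t y = some c}, R.Adj y t ∧ f = s(y, t)} := by
    replace hu := TCD.toTorso_ofTree_eq_inr.1 hu
    replace hv := mt TCD.toTorso_ofTree_eq_inr.2 hv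
    have hsep (p : R.Walk (ι u) (ι v)) : t ∈ p.support := by
      by_contra hp
      exact hv (compOf_eq_of_walk p hp ▸ hu)
    rcases mem_eloc_or_adj_of_forall_mem_support hTR hHT (hι u v huv)
      (ne_of_compOf_eq_some hu) hsep with h | ⟨hadj, hvt⟩
    · exact Or.inl (Finset.mem_filter.2 ⟨h, ι u, Sym2.mem_mk_left _ _, hu⟩)
    · exact Or.inr ⟨ι u, hu, hadj, by rw [hvt]⟩
  have hdeg : mdeg ((TCD.ofTree G R hR r ι).torsoE t) (Sum.inr c) =
      #{e ∈ {e : Sym2 V | e ∈ G.edgeSet} |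
        ¬ (Sym2.map ((TCD.ofTree G R hR r ι).toTorso t) e).IsDiag ∧
          Sum.inr c ∈ Sym2.map ((TCD.ofTree G R hR r ι).toTorso t) e} := by
    unfold TCD.torsoE
    rw [mdeg_filter_not_isDiag, Multiset.filter_map, Multiset.card_map]
    rfl
  rw [hdeg]
  refine card_le_card_add_one_of_injOn (Sym2.map.injective ι.injective).injOn (fun e he => ?_)
    (hR.isAcyclic.subsingleton_edges_into_of_walk_notMem_support (t := t)
      (A := {y | R.compOf t y = some c}) fun _ ha _ hb => exists_walk_of_compOf_eq ha hb)
  induction e using Sym2.ind with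
  | _ u v =>
    obtain ⟨huv, hdiag, hc⟩ : G.Adj u v ∧ _ ∧ _ := by simpa using he
    rw [Sym2.map_mk]
    rcases hc with hc | hc
    · exact hcross u v huv hc fun h => hdiag (hc.trans h.symm)
    · rw [Sym2.eq_swap]
      exact hcross v u huv.symm hc fun h => hdiag (h.trans hc.symm)

lemma TCD.card_filter_two_lt_mdeg_torsoE_ofTree_le (hTR : T ≤ R)
    (hHT : ∀ a b, H.Adj a b → T.Reachable a b) (hι : ∀ u v, G.Adj u v → H.Adj (ι u) (ι v))
    (t : Fin n) :
    #{c : (TCD.ofTree G R hR r ι).Cmp t |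
      2 < mdeg ((TCD.ofTree G R hR r ι).torsoE t) (Sum.inr c)} ≤ #(eloc H T t) := by
  -- Double counting: such a component meets at least two edges of `E_loc(t)`, and an edge
  -- meets at most two components.
  have hcount := Finset.card_mul_le_card_mul (fun c f => ∃ x ∈ f, R.compOf t x = some c)
    (m := 2) (n := 2) (s := {c : (TCD.ofTree G R hR r ι).Cmp t |
      2 < mdeg ((TCD.ofTree G R hR r ι).torsoE t) (Sum.inr c)}) (t := eloc H T t)
    (fun c hc => by
      have hdeg := TCD.mdeg_torsoE_ofTree_le (hR := hR) (r := r) hTR hHT hι c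
      have hbad := (Finset.mem_filter.1 hc).2
      convert Nat.le_of_lt_succ (hbad.trans_le hdeg) using 2
      exact Finset.filter_congr fun _ _ => Iff.rfl)
    (fun f _ => card_filter_exists_mem_eq_some_le_two _ f _)
  exact Nat.le_of_mul_le_mul_right hcount two_pos

lemma TCD.tor_ofTree_le (hTR : T ≤ R) (hHT : ∀ a b, H.Adj a b → T.Reachable a b)
    (hι : ∀ u v, G.Adj u v → H.Adj (ι u) (ι v)) (t : Fin n) :
    (TCD.ofTree G R hR r ι).tor t ≤ #(eloc H T t) + 1 := by
  set D := TCD.ofTree G R hR r ι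
  have hbad : {x ∈ D.torsoS t | x ∉ (D.bag t).image Sum.inl ∧ 2 < mdeg (D.torsoE t) x} ⊆
      ({c : D.Cmp t | 2 < mdeg (D.torsoE t) (Sum.inr c)} : Finset _).image Sum.inr := by
    intro x hx
    obtain ⟨hxS, hxX, hx⟩ := Finset.mem_filter.1 hx
    obtain ⟨c, -, rfl⟩ := Finset.mem_image.1 ((Finset.mem_union.1 hxS).resolve_left hxX)
    exact Finset.mem_image_of_mem _ (Finset.mem_filter.2 ⟨Finset.mem_univ _, hx⟩)
  calc D.tor t
      ≤ #((D.bag t).image Sum.inl) +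
          #{x ∈ D.torsoS t | x ∉ (D.bag t).image Sum.inl ∧ 2 < mdeg (D.torsoE t) x} :=
        card_reduce_le ..
    _ ≤ 1 + #(eloc H T t) := by
        gcongr
        · exact Finset.card_image_le.trans (TCD.card_bag_ofTree_le_one t)
        · exact (Finset.card_le_card hbad).trans (Finset.card_image_le.trans
            (TCD.card_filter_two_lt_mdeg_torsoE_ofTree_le hTR hHT hι t))
    _ = #(eloc H T t) + 1 := add_comm _ _

theorem TCD.width_ofTree_le (hTR : T ≤ R) (hHT : ∀ a b, H.Adj a b → T.Reachable a b)
    (hι : ∀ u v, G.Adj u v → H.Adj (ι u) (ι v)) :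
    (TCD.ofTree G R hR r ι).width ≤ ecwPair H T := by
  refine Finset.sup_le fun t _ => ?_
  have hsup : #(eloc H T t) ≤ Finset.univ.sup fun v => elocCard H T v :=
    Finset.le_sup (f := fun v => elocCard H T v) (Finset.mem_univ t)
  rw [ecwPair]
  exact max_le ((TCD.adh_ofTree_le hTR hHT hι t).trans (by omega))
    ((TCD.tor_ofTree_le hTR hHT hι t).trans (by omega))

end OfTree

theorem exists_tcd_width_le_ecwPair {V W : Type} [Fintype V] [Fintype W] (G : SimpleGraph V)
    (H T : SimpleGraph W) (ι : V ↪ W) (hι : ∀ u v, G.Adj u v → H.Adj (ι u) (ι v))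
    (hT : IsMSF H T) : ∃ D : TCD G, D.width ≤ ecwPair H T := by
  cases isEmpty_or_nonempty W with
  | inl hW =>
    have : IsEmpty V := Function.isEmpty ι
    refine ⟨TCD.ofTree G (⊥ : SimpleGraph (Fin 1)) IsTree.of_subsingleton 0
      Function.Embedding.ofIsEmpty, ?_⟩
    calc _ ≤ ecwPair (⊥ : SimpleGraph (Fin 1)) ⊥ :=
          TCD.width_ofTree_le le_rfl (fun _ _ h => h.elim) (fun u => isEmptyElim u)
      _ = 1 := ecwPair_bot _
      _ ≤ ecwPair H T := Nat.le_add_right 1 _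
  | inr hW =>
    obtain ⟨-, hTacyclic, hTreach⟩ := hT
    obtain ⟨R, hTR, -, hR⟩ := connected_top.exists_isTree_le_of_le_of_isAcyclic le_top hTacyclic
    let e := (Fintype.equivFin W).symm
    refine ⟨TCD.ofTree G (R.comap e) ((Iso.comap e R).isTree_iff.2 hR) ⟨0, Fintype.card_pos⟩
      (ι.trans e.symm.toEmbedding), ?_⟩
    calc _ ≤ ecwPair (H.comap e.toEmbedding) (T.comap e.toEmbedding) :=
          TCD.width_ofTree_le (fun _ _ h => hTR h)
            (fun _ _ h => (Iso.comap e T).reachable_iff.1 (hTreach _ _ h))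
            (fun u v h => by simpa using hι u v h)
      _ ≤ ecwPair H T := ecwPair_comap_le e.toEmbedding H T

/-- for every graph `G`, `tcw(G) ≤ secw(G)`. -/
theorem stmt12 {V : Type} [Fintype V] (G : SimpleGraph V) : tcw G ≤ secw G := by
  obtain ⟨T, hTG, hT, hreach⟩ := G.exists_isAcyclic_reachable_eq_le
  refine le_csInf ⟨ecwPair G T, V, inferInstance, G, .refl V, fun _ _ h => h, T,
    ⟨hTG, hT, fun _ _ h => hreach ▸ h.reachable⟩, le_rfl⟩ ?_
  rintro k ⟨W, _, H, ι, hι, T, hT, hk⟩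
  obtain ⟨D, hD⟩ := exists_tcd_width_le_ecwPair G H T ι hι hT
  exact Nat.sInf_le ⟨D, hD.trans hk⟩

end PaperSTCW
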